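/- Let F be a nonarchimedean local field, ψ an unramified additive character of F, and m ≥ 1 an integer. Let W : SL₂(F) → ℂ be a function satisfying: (i) W(n(b)·g) = ψ(b)·W(g) for all b ∈ F and g ∈ SL₂(F); (ii) W(g·n̄(x)) = W(g) for all x ∈ 𝔪^{3m} and g ∈ SL₂(F). If W(t(a)·w) ≠ 0 for some a ∈ F^×, then a² ∈ 𝔪^{-3m}, i.e. v(a) ≥ −3m/2. (Lemma 3.2(2) of the paper; the key identity is t(a)·w·n̄(x) = n(−a²x)·t(a)·w.) -/

import Mathlib

/-!
We model a nonarchimedean local field as a field `F` complete with respect to a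
nontrivial discrete valuation `Valued.v : F → ℤₘ₀` (the hypothesis
`Function.Surjective (Valued.v : F → ℤₘ₀)` says the valuation is discrete and
nontrivial, with value group exactly `ℤ`), with finite residue field
(`FiniteResidueField F` below says `𝒪/𝔪` is finite).
For `m : ℤ`, `mpow F m` is the fractional ideal `𝔪^m = {x : v(x) ≥ m}` (written
multiplicatively: `v x ≤ ofAdd (-m)`), and `oneAddMpow F m` is the set `1 + 𝔪^m`.
-/

open scoped Multiplicative WithZero
open MatrixGroups MeasureTheory

noncomputable section

/-- The fractional ideal `𝔪^m = {x ∈ F : v(x) ≥ m}`. -/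
def mpow (F : Type*) [Field F] [Valued F ℤᵐ⁰] (m : ℤ) : Set F :=
  {x : F | Valued.v x ≤ ((Multiplicative.ofAdd (-m) : Multiplicative ℤ) : ℤᵐ⁰)}

/-- The set `1 + 𝔪^m`. -/
def oneAddMpow (F : Type*) [Field F] [Valued F ℤᵐ⁰] (m : ℤ) : Set F :=
  {x : F | x - 1 ∈ mpow F m}

/-- An additive character `ψ` of `F` is unramified if it is trivial on the ring of
integers `𝒪 = 𝔪^0` but nontrivial on `𝔪^{-1}`. -/
def IsUnramified (F : Type*) [Field F] [Valued F ℤᵐ⁰] (ψ : AddChar F ℂ) : Prop :=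
  (∀ x ∈ mpow F 0, ψ x = 1) ∧ ∃ x ∈ mpow F (-1), ψ x ≠ 1

/-- The residue field `𝒪/𝔪` is finite: finitely many elements of `𝒪` cover `𝒪`
modulo `𝔪`. -/
def FiniteResidueField (F : Type*) [Field F] [Valued F ℤᵐ⁰] : Prop :=
  ∃ S : Finset F, ∀ x ∈ mpow F 0, ∃ y ∈ S, x - y ∈ mpow F 1

/-- The residue field of `F` has characteristic different from `2`, i.e. `2` is a
unit of the ring of integers, i.e. `2 ∉ 𝔪`. -/
def ResidueCharNeTwo (F : Type*) [Field F] [Valued F ℤᵐ⁰] : Prop :=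
  (2 : F) ∉ mpow F 1

/-- `n(b) = [[1,b],[0,1]] ∈ SL₂(F)`. -/
def nMat (F : Type*) [Field F] (b : F) : SL(2,F) :=
  ⟨!![1, b; 0, 1], by simp [Matrix.det_fin_two_of]⟩

/-- `n̄(x) = [[1,0],[x,1]] ∈ SL₂(F)`. -/
def nbarMat (F : Type*) [Field F] (x : F) : SL(2,F) :=
  ⟨!![1, 0; x, 1], by simp [Matrix.det_fin_two_of]⟩

/-- `t(a) = [[a,0],[0,a⁻¹]] ∈ SL₂(F)` for `a ∈ F^×`. -/
def tMat (F : Type*) [Field F] (a : Fˣ) : SL(2,F) :=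
  ⟨!![(a : F), 0; 0, ((a⁻¹ : Fˣ) : F)], by simp [Matrix.det_fin_two_of]⟩

/-- `w = [[0,1],[-1,0]] ∈ SL₂(F)`. -/
def wMat (F : Type*) [Field F] : SL(2,F) :=
  ⟨!![0, 1; -1, 0], by simp [Matrix.det_fin_two_of]⟩

/-!
If `a² ∉ 𝔪^{-3m}`, pick `y ∈ 𝔪⁻¹` with `ψ y ≠ 1`; then `x = -y / a²` lies in `𝔪^{3m}`, and
`t(a) w n̄(x) = n(y) t(a) w` turns the right `n̄(x)`-invariance of `W` into
`W(t(a) w) = ψ(y) W(t(a) w)`, so `W(t(a) w) = 0`.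
-/

open WithZero

lemma mem_mpow_iff {F : Type*} [Field F] [Valued F ℤᵐ⁰] {x : F} {m : ℤ} :
    x ∈ mpow F m ↔ Valued.v x ≤ exp (-m) := Iff.rfl

lemma neg_mem_mpow {F : Type*} [Field F] [Valued F ℤᵐ⁰] {x : F} {m : ℤ} (hx : x ∈ mpow F m) :
    -x ∈ mpow F m := by
  rwa [mem_mpow_iff, Valuation.map_neg]

lemma div_mem_mpow_of_notMem_mpow {F : Type*} [Field F] [Valued F ℤᵐ⁰] {y c : F} {j k : ℤ}
    (hy : y ∈ mpow F j) (hc : c ∉ mpow F (-k)) : y / c ∈ mpow F (j + k + 1) := by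
  rw [mem_mpow_iff, neg_neg, not_le] at hc
  have hc0 : Valued.v c ≠ 0 := (exp_pos.trans hc).ne'
  -- the value group is `ℤ`, so `exp k < v c` improves to `exp (k + 1) ≤ v c`
  have hck : exp (k + 1) ≤ Valued.v c :=
    (le_log_iff_exp_le hc0).mp ((lt_log_iff_exp_lt hc0).mpr hc)
  rw [mem_mpow_iff, map_div₀, div_le_iff₀ (zero_lt_iff.mpr hc0)]
  calc Valued.v y ≤ exp (-j) := hy
    _ = exp (-(j + k + 1)) * exp (k + 1) := by rw [← exp_add]; ring_nf
    _ ≤ exp (-(j + k + 1)) * Valued.v c := by gcongr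

lemma tMat_mul_wMat_mul_nbarMat (F : Type*) [Field F] (a : Fˣ) (x : F) :
    tMat F a * wMat F * nbarMat F x = nMat F (-((a : F) ^ 2 * x)) * (tMat F a * wMat F) := by
  ext i j
  simp only [Matrix.SpecialLinearGroup.coe_mul]
  fin_cases i <;> fin_cases j <;> simp [tMat, wMat, nbarMat, nMat, sq, mul_right_comm _ x]

lemma apply_eq_one_of_tMat_mul_wMat_mul_nbarMat {F : Type*} [Field F] {ψ : AddChar F ℂ}
    {W : SL(2,F) → ℂ} (hW : ∀ (b : F) (g : SL(2,F)), W (nMat F b * g) = ψ b * W g)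
    {a : Fˣ} (hWa : W (tMat F a * wMat F) ≠ 0) {x : F}
    (hx : W (tMat F a * wMat F * nbarMat F x) = W (tMat F a * wMat F)) :
    ψ (-((a : F) ^ 2 * x)) = 1 := by
  rw [tMat_mul_wMat_mul_nbarMat, hW] at hx
  exact (mul_eq_right₀ hWa).mp hx

theorem howe_vector_big_cell_support_general
    (F : Type*) [Field F] [Valued F ℤᵐ⁰]
    (ψ : AddChar F ℂ) (hψ : IsUnramified F ψ)
    (m : ℤ)
    (W : SL(2,F) → ℂ)
    (hW1 : ∀ (b : F) (g : SL(2,F)), W (nMat F b * g) = ψ b * W g)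
    (hW2 : ∀ x ∈ mpow F (3 * m), ∀ g : SL(2,F), W (g * nbarMat F x) = W g)
    (a : Fˣ) (hWa : W (tMat F a * wMat F) ≠ 0) :
    ((a : F)) ^ 2 ∈ mpow F (-(3 * m)) := by
  by_contra ha
  obtain ⟨y, hy, hψy⟩ := hψ.2
  have hx : -(y / (a : F) ^ 2) ∈ mpow F (3 * m) := by
    simpa using neg_mem_mpow (div_mem_mpow_of_notMem_mpow hy ha)
  have hψy' := apply_eq_one_of_tMat_mul_wMat_mul_nbarMat hW1 hWa (hW2 _ hx _)
  rw [mul_neg, neg_neg, mul_div_cancel₀ _ (pow_ne_zero 2 a.ne_zero)] at hψy'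
  exact hψy hψy'

/-- Lemma 3.2(2). Let `ψ` be unramified, `m ≥ 1`, and let
`W : SL₂(F) → ℂ` satisfy `W(n(b)·g) = ψ(b)·W(g)` for all `b ∈ F` and
`W(g·n̄(x)) = W(g)` for all `x ∈ 𝔪^{3m}`. If `W(t(a)·w) ≠ 0` for some
`a ∈ F^×`, then `a² ∈ 𝔪^{-3m}`. -/
theorem howe_vector_big_cell_support
    (F : Type*) [Field F] [Valued F ℤᵐ⁰] [CompleteSpace F]
    (hdisc : Function.Surjective (Valued.v : F → ℤᵐ⁰))
    (hfin : FiniteResidueField F)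
    (ψ : AddChar F ℂ) (hψcont : Continuous ψ) (hψ : IsUnramified F ψ)
    (m : ℤ) (hm : 1 ≤ m)
    (W : SL(2,F) → ℂ)
    (hW1 : ∀ (b : F) (g : SL(2,F)), W (nMat F b * g) = ψ b * W g)
    (hW2 : ∀ x ∈ mpow F (3 * m), ∀ g : SL(2,F), W (g * nbarMat F x) = W g)
    (a : Fˣ) (hWa : W (tMat F a * wMat F) ≠ 0) :
    ((a : F)) ^ 2 ∈ mpow F (-(3 * m)) :=
  howe_vector_big_cell_support_general F ψ hψ m W hW1 hW2 a hWa
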